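/- Let θ ≥ 2 be an integer and r ∈ {1, …, θ−1}. Define R : (0, 1/r) → ℝ by R(t) = (2θ(θ−r)/r) · ( r·t·log t + (1 − r·t)·log((1 − r·t)/(θ − r)) + log θ ) / (θt − 1)² for t ≠ 1/θ, and R(1/θ) = θ (the value making R continuous at t = 1/θ). Then R is convex on the interval (0, 1/r). -/

import Mathlib

/-!
The numerator `f t = r t log t + (1 - r t) log ((1 - r t) / (θ - r)) + log θ` is the
Kullback–Leibler divergence from the uniform distribution on `θ` points of the distribution
giving mass `t` to `r` of them and `(1 - r t) / (θ - r)` to the others. Hence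
`f (1/θ) = f' (1/θ) = 0`, while `f'' t = r / t + r² / (1 - r t)` is convex on `(0, 1/r)`.
Taylor's formula with integral remainder gives
`f t / (t - 1/θ)² = ∫₀¹ (1 - s) f'' (1/θ + s (t - 1/θ)) ds`, also at `t = 1/θ` if the left
side is read as `f'' (1/θ) / 2`, and this average of convex functions of `t` is convex.
-/

open Real Set

section TaylorAverage

variable {I : Set ℝ} {a : ℝ}

theorem Convex.add_mul_sub_mem (hI : Convex ℝ I) (ha : a ∈ I) {t s : ℝ} (ht : t ∈ I)
    (hs : s ∈ Icc (0 : ℝ) 1) : a + s * (t - a) ∈ I :=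
  hI.add_smul_sub_mem ha ht hs

theorem intervalIntegrable_mul_comp_add_mul_sub {φ w : ℝ → ℝ} (hI : Convex ℝ I)
    (hφ : ContinuousOn φ I) (hw : Continuous w) (ha : a ∈ I) {t : ℝ} (ht : t ∈ I) :
    IntervalIntegrable (fun s => w s * φ (a + s * (t - a))) MeasureTheory.volume 0 1 := by
  refine ContinuousOn.intervalIntegrable (hw.continuousOn.mul (hφ.comp (by fun_prop) ?_))
  intro s hs
  rw [uIcc_of_le zero_le_one] at hs
  exact hI.add_mul_sub_mem ha ht hs

theorem taylor_integral_remainder_order_one {f f' f'' : ℝ → ℝ} (hI : Convex ℝ I)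
    (hf : ∀ x ∈ I, HasDerivAt f (f' x) x) (hf' : ∀ x ∈ I, HasDerivAt f' (f'' x) x)
    (hf'' : ContinuousOn f'' I) (ha : a ∈ I) {t : ℝ} (ht : t ∈ I) :
    f t = f a + f' a * (t - a) +
      (t - a) ^ 2 * ∫ s in (0 : ℝ)..1, (1 - s) * f'' (a + s * (t - a)) := by
  have hG : ∀ s ∈ uIcc (0 : ℝ) 1,
      HasDerivAt (fun s => f (a + s * (t - a)) + (1 - s) * (t - a) * f' (a + s * (t - a)))
        ((t - a) ^ 2 * ((1 - s) * f'' (a + s * (t - a)))) s := by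
    intro s hs
    rw [uIcc_of_le zero_le_one] at hs
    have hmem := hI.add_mul_sub_mem ha ht hs
    have hline : HasDerivAt (fun s : ℝ => a + s * (t - a)) (t - a) s := by
      simpa using ((hasDerivAt_id s).mul_const (t - a)).const_add a
    have hweight : HasDerivAt (fun s : ℝ => (1 - s) * (t - a)) (-(t - a)) s := by
      simpa using ((hasDerivAt_id s).const_sub 1).mul_const (t - a)
    refine (((hf _ hmem).comp s hline).add
      (hweight.mul ((hf' _ hmem).comp s hline))).congr_deriv ?_
    simp only [Function.comp_apply]
    ring
  have hint := (intervalIntegrable_mul_comp_add_mul_sub (w := fun s => 1 - s) hI hf''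
    (by fun_prop) ha ht).const_mul ((t - a) ^ 2)
  rw [← intervalIntegral.integral_const_mul,
    intervalIntegral.integral_eq_sub_of_hasDerivAt hG hint]
  norm_num
  ring

theorem ConvexOn.integral_mul_comp_add_mul_sub {φ w : ℝ → ℝ} (hφ : ConvexOn ℝ I φ)
    (hφc : ContinuousOn φ I) (hw : Continuous w) (hw₀ : ∀ s ∈ Icc (0 : ℝ) 1, 0 ≤ w s)
    (ha : a ∈ I) :
    ConvexOn ℝ I fun t => ∫ s in (0 : ℝ)..1, w s * φ (a + s * (t - a)) := by
  have hint := fun {t} (ht : t ∈ I) => intervalIntegrable_mul_comp_add_mul_sub hφ.1 hφc hw ha ht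
  refine ⟨hφ.1, fun x hx y hy α β hα hβ hαβ => ?_⟩
  simp only [smul_eq_mul]
  rw [← intervalIntegral.integral_const_mul, ← intervalIntegral.integral_const_mul,
    ← intervalIntegral.integral_add ((hint hx).const_mul α) ((hint hy).const_mul β)]
  refine intervalIntegral.integral_mono_on zero_le_one
    (hint (hφ.1 hx hy hα hβ hαβ)) (((hint hx).const_mul α).add ((hint hy).const_mul β))
    fun s hs => ?_
  have hsplit :
      a + s * (α * x + β * y - a) = α * (a + s * (x - a)) + β * (a + s * (y - a)) := by
    linear_combination (1 - s) * a * hαβ.symm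
  calc w s * φ (a + s * (α * x + β * y - a))
      ≤ w s * (α * φ (a + s * (x - a)) + β * φ (a + s * (y - a))) := by
        rw [hsplit]
        exact mul_le_mul_of_nonneg_left (hφ.2 (hφ.1.add_mul_sub_mem ha hx hs)
          (hφ.1.add_mul_sub_mem ha hy hs) hα hβ hαβ) (hw₀ s hs)
    _ = α * (w s * φ (a + s * (x - a))) + β * (w s * φ (a + s * (y - a))) := by ring

theorem ConvexOn.div_sq_sub_of_hasDerivAt {f f' f'' : ℝ → ℝ} (hI : IsOpen I)
    (hf : ∀ x ∈ I, HasDerivAt f (f' x) x) (hf' : ∀ x ∈ I, HasDerivAt f' (f'' x) x)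
    (hf'' : ConvexOn ℝ I f'') (ha : a ∈ I) (hfa : f a = 0) (hf'a : f' a = 0) :
    ConvexOn ℝ I fun t => if t = a then f'' a / 2 else f t / (t - a) ^ 2 := by
  have hcont := hf''.continuousOn hI
  refine (hf''.integral_mul_comp_add_mul_sub hcont (w := fun s => 1 - s)
    (by fun_prop) (fun s hs => sub_nonneg.2 hs.2) ha).congr fun t ht => ?_
  by_cases hta : t = a
  · subst hta
    simp only [sub_self, mul_zero, add_zero, if_true]
    rw [intervalIntegral.integral_mul_const, intervalIntegral.integral_sub
      intervalIntegrable_const intervalIntegral.intervalIntegrable_id, integral_id,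
      intervalIntegral.integral_const]
    norm_num
    ring
  · have hTaylor := taylor_integral_remainder_order_one hf''.1 hf hf' hcont ha ht
    rw [hfa, hf'a] at hTaylor
    rw [if_neg hta, hTaylor, zero_add, zero_mul, zero_add,
      mul_div_cancel_left₀ _ (pow_ne_zero 2 (sub_ne_zero.2 hta))]

end TaylorAverage

theorem convexOn_inv_Ioi : ConvexOn ℝ (Ioi 0) fun x : ℝ => x⁻¹ := by
  simpa using convexOn_zpow (𝕜 := ℝ) (-1)

theorem convexOn_inv_one_sub_mul (ρ : ℝ) :
    ConvexOn ℝ {u | ρ * u < 1} fun u : ℝ => (1 - ρ * u)⁻¹ := by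
  let g : ℝ →ᵃ[ℝ] ℝ := AffineMap.const ℝ ℝ 1 - ρ • AffineMap.id ℝ ℝ
  have h := convexOn_inv_Ioi.comp_affineMap g
  have hs : g ⁻¹' Ioi 0 = {u | ρ * u < 1} := by ext u; simp [g]
  rw [hs] at h
  exact h.congr fun u _ => by simp [g]

section KL

variable (ρ Θ : ℝ)

noncomputable def klToUniform (t : ℝ) : ℝ :=
  ρ * t * log t + (1 - ρ * t) * (log (1 - ρ * t) - log (Θ - ρ)) + log Θ

theorem hasDerivAt_klToUniform {u : ℝ} (hu : 0 < u) (hρu : ρ * u < 1) :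
    HasDerivAt (klToUniform ρ Θ) (ρ * (log u - log (1 - ρ * u) + log (Θ - ρ))) u := by
  have hline : HasDerivAt (fun x : ℝ => 1 - ρ * x) (-ρ) u := by
    simpa using ((hasDerivAt_id u).const_mul ρ).const_sub 1
  have hlog : HasDerivAt (fun x : ℝ => log (1 - ρ * x)) (-ρ / (1 - ρ * u)) u := by
    simpa [div_eq_inv_mul] using hline.log (by linarith)
  refine ((((hasDerivAt_id' u).const_mul ρ).mul (hasDerivAt_log hu.ne')).add
    (hline.mul (hlog.sub_const (log (Θ - ρ))))).add_const (log Θ) |>.congr_deriv ?_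
  have : 1 - ρ * u ≠ 0 := by linarith
  field_simp
  ring

theorem hasDerivAt_klToUniform_deriv {u : ℝ} (hu : 0 < u) (hρu : ρ * u < 1) :
    HasDerivAt (fun x => ρ * (log x - log (1 - ρ * x) + log (Θ - ρ)))
      (ρ / u + ρ ^ 2 / (1 - ρ * u)) u := by
  have hline : HasDerivAt (fun x : ℝ => 1 - ρ * x) (-ρ) u := by
    simpa using ((hasDerivAt_id u).const_mul ρ).const_sub 1
  refine ((((hasDerivAt_log hu.ne').sub (hline.log (by linarith))).add_const
    (log (Θ - ρ))).const_mul ρ).congr_deriv ?_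
  ring

variable {ρ Θ}

theorem klToUniform_one_div (hρΘ : Θ - ρ ≠ 0) (hΘ : Θ ≠ 0) :
    klToUniform ρ Θ (1 / Θ) = 0 := by
  have h : 1 - ρ * (1 / Θ) = (Θ - ρ) / Θ := by field_simp
  rw [klToUniform, h, log_div hρΘ hΘ, one_div, log_inv]
  field_simp
  ring

theorem klToUniform_deriv_one_div (hρΘ : Θ - ρ ≠ 0) (hΘ : Θ ≠ 0) :
    ρ * (log (1 / Θ) - log (1 - ρ * (1 / Θ)) + log (Θ - ρ)) = 0 := by
  have h : 1 - ρ * (1 / Θ) = (Θ - ρ) / Θ := by field_simp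
  rw [h, log_div hρΘ hΘ, one_div, log_inv]
  ring

theorem convexOn_klToUniform_deriv2 (hρ : 0 ≤ ρ) :
    ConvexOn ℝ (Ioi 0 ∩ {u | ρ * u < 1}) fun u => ρ / u + ρ ^ 2 / (1 - ρ * u) := by
  have hconv : Convex ℝ (Ioi 0 ∩ {u | ρ * u < 1}) :=
    (convex_Ioi 0).inter (convexOn_inv_one_sub_mul ρ).1
  have h₁ := (convexOn_inv_Ioi.smul hρ).subset inter_subset_left hconv
  have h₂ := ((convexOn_inv_one_sub_mul ρ).smul (sq_nonneg ρ)).subset inter_subset_right hconv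
  exact (h₁.add h₂).congr fun u _ => by simp [div_eq_mul_inv]

theorem convexOn_klToUniform_div_sq (hρ : 0 ≤ ρ) (hρΘ : ρ < Θ) :
    ConvexOn ℝ (Ioi 0 ∩ {u | ρ * u < 1}) fun t =>
      if t = 1 / Θ then (ρ / (1 / Θ) + ρ ^ 2 / (1 - ρ * (1 / Θ))) / 2
      else klToUniform ρ Θ t / (t - 1 / Θ) ^ 2 := by
  have hΘ : 0 < Θ := hρ.trans_lt hρΘ
  have hopen : IsOpen (Ioi 0 ∩ {u | ρ * u < 1}) :=
    isOpen_Ioi.inter (isOpen_lt (by fun_prop) (by fun_prop))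
  have ha : 1 / Θ ∈ Ioi 0 ∩ {u | ρ * u < 1} :=
    ⟨one_div_pos.2 hΘ, show ρ * (1 / Θ) < 1 by rwa [mul_one_div, div_lt_one hΘ]⟩
  exact (convexOn_klToUniform_deriv2 hρ).div_sq_sub_of_hasDerivAt hopen
    (fun u hu => hasDerivAt_klToUniform ρ Θ hu.1 hu.2)
    (fun u hu => hasDerivAt_klToUniform_deriv ρ Θ hu.1 hu.2) ha
    (klToUniform_one_div (by linarith) hΘ.ne') (klToUniform_deriv_one_div (by linarith) hΘ.ne')

end KL

theorem stmt17 (θ r : ℕ) (hr : 1 ≤ r) (hrθ : r ≤ θ - 1) :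
    ConvexOn ℝ (Set.Ioo (0 : ℝ) (1 / (r : ℝ))) (fun t : ℝ =>
      if t = 1 / (θ : ℝ) then (θ : ℝ)
      else (2 * (θ : ℝ) * ((θ : ℝ) - (r : ℝ)) / (r : ℝ)) *
        ((r : ℝ) * t * Real.log t
          + (1 - (r : ℝ) * t) * Real.log ((1 - (r : ℝ) * t) / ((θ : ℝ) - (r : ℝ)))
          + Real.log (θ : ℝ)) / ((θ : ℝ) * t - 1) ^ 2) := by
  set ρ : ℝ := (r : ℝ)
  set Θ : ℝ := (θ : ℝ)
  have hρ : 0 < ρ := by simp only [ρ]; exact_mod_cast hr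
  have hρΘ : ρ < Θ := by simp only [ρ, Θ]; exact_mod_cast (by omega : r < θ)
  have hΘ : 0 < Θ := hρ.trans hρΘ
  have hΘρ : Θ - ρ ≠ 0 := by linarith
  have hdomain : Ioo 0 (1 / ρ) = Ioi 0 ∩ {u | ρ * u < 1} := by
    ext u; rw [mem_Ioo, lt_div_iff₀ hρ, mul_comm]; rfl
  rw [hdomain]
  refine ((convexOn_klToUniform_div_sq hρ.le hρΘ).smul (c := 2 * (Θ - ρ) / (ρ * Θ))
    (by positivity)).congr fun t ht => ?_
  by_cases h : t = 1 / Θ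
  · simp only [h, if_true, smul_eq_mul]
    field_simp
    ring
  · simp only [if_neg h, smul_eq_mul, klToUniform]
    rw [log_div (sub_pos.2 ht.2).ne' hΘρ]
    have : Θ * t - 1 ≠ 0 := fun h' => h (by field_simp; linarith)
    field_simp
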